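/- arXiv:1802.01920 — 3 statements merged into one kernel-verified Lean document; each statement's English description precedes it below -/
import Mathlib

section
/- Let B ∈ K[x]^{k×μ} be a basis of the left kernel of a matrix M ∈ K[x]^{μ×ν} (i.e., the rows of B generate {v ∈ K[x]^{1×μ} | vM = 0} and B has full row rank). Then any column basis S of B is unimodular; equivalently, there exists U ∈ K[x]^{μ×k} such that B·U = I_k. -/
/-!
Over `K[X]` the image of `v ↦ v * M` is a submodule of a free module over a PID, hence free,
so the surjection onto it splits and its kernel is a direct summand of `K[X]^μ`. Reading the
projection onto the kernel in the basis given by the rows of `B` yields `U` with `B * U = 1`.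
Then the columns of `B`, and hence those of `S`, span all of `K[X]^k`, so `S` is invertible.
-/

open Polynomial Matrix

noncomputable section

def rowsBasis {k μ : ℕ} {K : Type*} [Field K] (B : Matrix (Fin k) (Fin μ) K[X])
    (N : Submodule K[X] (Fin μ → K[X])) : Prop :=
  LinearIndependent K[X] (fun i => B i) ∧
    Submodule.span K[X] (Set.range fun i => B i) = N

theorem LinearMap.exists_leftInverse_ker_subtype {R M N : Type*} [Ring R] [AddCommGroup M]
    [Module R M] [AddCommGroup N] [Module R N] (f : M →ₗ[R] N) [Module.Projective R (range f)] :
    ∃ π : M →ₗ[R] ker f, π ∘ₗ (ker f).subtype = LinearMap.id := by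
  obtain ⟨s, hs⟩ := f.rangeRestrict.exists_rightInverse_of_surjective f.range_rangeRestrict
  have hker : ∀ x, x - s (f.rangeRestrict x) ∈ ker f := fun x => by
    have hfs : f (s (f.rangeRestrict x)) = f x :=
      congr_arg Subtype.val (congr($hs (f.rangeRestrict x)))
    rw [mem_ker, map_sub, hfs, sub_self]
  refine ⟨(LinearMap.id - s ∘ₗ f.rangeRestrict).codRestrict (ker f) hker, ?_⟩
  ext ⟨x, hx⟩
  have : f.rangeRestrict x = 0 := Subtype.ext (by simpa using hx)
  simp [this]

theorem Matrix.exists_mul_eq_one_of_rows_basis {R : Type*} [CommRing R] {m n : Type*}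
    [Fintype m] [DecidableEq m] [Fintype n] [DecidableEq n] (B : Matrix m n R)
    {N : Submodule R (n → R)} (hind : LinearIndependent R fun i => B i)
    (hspan : Submodule.span R (Set.range fun i => B i) = N)
    (π : (n → R) →ₗ[R] N) (hπ : π ∘ₗ N.subtype = LinearMap.id) :
    ∃ U : Matrix n m R, B * U = 1 := by
  have hmem : ∀ i, B i ∈ N := fun i => hspan ▸ Submodule.subset_span ⟨i, rfl⟩
  let b : Module.Basis m R N := .mk (v := fun i => ⟨B i, hmem i⟩)
    (.of_comp N.subtype hind) (by
      rw [← Submodule.map_le_map_iff_of_injective N.injective_subtype, Submodule.map_top,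
        Submodule.range_subtype, Submodule.map_span, ← Set.range_comp]
      exact hspan.ge)
  refine ⟨(LinearMap.toMatrix' (b.equivFun.toLinearMap ∘ₗ π))ᵀ, ?_⟩
  ext i j
  have hπb : π (B i) = b i := by simpa [b] using congr($hπ (b i))
  rw [mul_apply_eq_vecMul, vecMul_transpose, LinearMap.toMatrix'_mulVec]
  simp [hπb, one_apply]

theorem exists_mul_eq_one_of_rowsBasis_ker {K : Type*} [Field K] {k μ ν : ℕ}
    (M : Matrix (Fin μ) (Fin ν) K[X]) (B : Matrix (Fin k) (Fin μ) K[X])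
    (hB : rowsBasis B (LinearMap.ker M.vecMulLinear)) :
    ∃ U : Matrix (Fin μ) (Fin k) K[X], B * U = 1 :=
  let ⟨π, hπ⟩ := M.vecMulLinear.exists_leftInverse_ker_subtype
  B.exists_mul_eq_one_of_rows_basis hB.1 hB.2 π hπ

theorem Matrix.span_cols_eq_top_of_mul_eq_one {R : Type*} [CommRing R] {m n : Type*}
    [Fintype m] [DecidableEq m] [Fintype n] {B : Matrix m n R} {U : Matrix n m R}
    (h : B * U = 1) : Submodule.span R (Set.range B.col) = ⊤ := by
  rw [← range_mulVecLin, LinearMap.range_eq_top]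
  exact mulVec_surjective_iff_exists_right_inverse.mpr ⟨U, h⟩

theorem Matrix.isUnit_det_of_span_cols_eq_top {R : Type*} [CommRing R] {m : Type*}
    [Fintype m] [DecidableEq m] {S : Matrix m m R}
    (h : Submodule.span R (Set.range S.col) = ⊤) : IsUnit S.det := by
  rw [← isUnit_iff_isUnit_det, ← mulVec_surjective_iff_isUnit]
  exact LinearMap.range_eq_top.mp (S.range_mulVecLin.trans h)

theorem column_basis_of_kernel_basis_unimodular_general
    {K : Type*} [Field K] {k μ ν : ℕ}
    (M : Matrix (Fin μ) (Fin ν) K[X]) (B : Matrix (Fin k) (Fin μ) K[X])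
    (hB : rowsBasis B (LinearMap.ker (Matrix.vecMulLinear M)))
    (S : Matrix (Fin k) (Fin k) K[X])
    (hSspan : Submodule.span K[X] (Set.range fun j : Fin k => fun i : Fin k => S i j)
      = Submodule.span K[X] (Set.range fun j : Fin μ => fun i : Fin k => B i j)) :
    IsUnit S.det ∧ ∃ U : Matrix (Fin μ) (Fin k) K[X], B * U = 1 := by
  obtain ⟨U, hU⟩ := exists_mul_eq_one_of_rowsBasis_ker M B hB
  have hScols := hSspan.trans (span_cols_eq_top_of_mul_eq_one hU)
  exact ⟨isUnit_det_of_span_cols_eq_top hScols, U, hU⟩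

/-- Any column basis of a kernel basis is unimodular; equivalently `B * U = 1` for some `U`. -/
theorem column_basis_of_kernel_basis_unimodular
    {K : Type*} [Field K] {k μ ν : ℕ}
    (M : Matrix (Fin μ) (Fin ν) K[X]) (B : Matrix (Fin k) (Fin μ) K[X])
    (hB : rowsBasis B (LinearMap.ker (Matrix.vecMulLinear M)))
    (S : Matrix (Fin k) (Fin k) K[X])
    (hSind : LinearIndependent K[X] (fun j : Fin k => fun i : Fin k => S i j))
    (hSspan : Submodule.span K[X] (Set.range fun j : Fin k => fun i : Fin k => S i j)
      = Submodule.span K[X] (Set.range fun j : Fin μ => fun i : Fin k => B i j)) :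
    IsUnit S.det ∧ ∃ U : Matrix (Fin μ) (Fin k) K[X], B * U = 1 :=
  column_basis_of_kernel_basis_unimodular_general M B hB S hSspan
end
end

section
/- Let P ∈ K[x]^{m×m} be s-reduced for a shift s ∈ Z^m. Then deg(det(P)) equals the sum of the s-row degrees of P minus the sum of the entries of s. In particular, det(P) is a nonzero monomial if and only if det(P) = det(P(1)) · x^Δ where Δ = Σ_i rdeg_s(row i of P) − Σ_j s_j. -/
open Polynomial Matrix

noncomputable section

def sRowDeg {m : ℕ} {K : Type*} [Field K] (s : Fin m → ℤ)
    (P : Matrix (Fin m) (Fin m) K[X]) (i : Fin m) : WithBot ℤ :=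
  Finset.univ.sup fun j => WithBot.map (fun k : ℕ => (k : ℤ) + s j) (P i j).degree

def sLeadingMatrix {m : ℕ} {K : Type*} [Field K] (s : Fin m → ℤ)
    (P : Matrix (Fin m) (Fin m) K[X]) : Matrix (Fin m) (Fin m) K :=
  Matrix.of fun i j =>
    WithBot.recBotCoe 0
      (fun r => if 0 ≤ r - s j then (P i j).coeff (r - s j).toNat else 0)
      (sRowDeg s P i)

/-- `P` is `s`-reduced when its `s`-leading matrix is invertible. -/
def sReduced {m : ℕ} {K : Type*} [Field K] (s : Fin m → ℤ)
    (P : Matrix (Fin m) (Fin m) K[X]) : Prop :=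
  IsUnit (sLeadingMatrix s P).det

/-! Multiplying column `j` of `P` by `X ^ (s j + c)`, for a constant `c` large enough to make all
exponents natural, turns the `s`-row degrees `r i` into ordinary bounds `r i + c` on the degrees
of the rows, and the `s`-leading matrix into the matrix of coefficients in those degrees. Expanding
the determinant, every term has degree at most `∑ (r i + c)`, and the coefficient in that degree is
the determinant of the `s`-leading matrix, nonzero by `s`-reducedness. As the shifted determinant
is `det P * X ^ ∑ (s j + c)`, this gives `deg det P = ∑ r i - ∑ s j`. A nonzero monomial `c X ^ δ`
has `c` as its value at `1` and `δ` as its degree. -/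

namespace Polynomial

theorem coeff_prod_sum_of_natDegree_le {R ι : Type*} [CommSemiring R] (t : Finset ι)
    (f : ι → R[X]) (n : ι → ℕ) (h : ∀ i ∈ t, (f i).natDegree ≤ n i) :
    (∏ i ∈ t, f i).coeff (∑ i ∈ t, n i) = ∏ i ∈ t, (f i).coeff (n i) := by
  induction t using Finset.cons_induction with
  | empty => simp
  | cons a t _ ih =>
    rw [Finset.forall_mem_cons] at h
    have hprod : (∏ i ∈ t, f i).natDegree ≤ ∑ i ∈ t, n i :=
      (natDegree_prod_le _ _).trans (Finset.sum_le_sum h.2)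
    rw [Finset.prod_cons, Finset.sum_cons, coeff_mul_add_eq_of_natDegree_le h.1 hprod,
      ih h.2, Finset.prod_cons]

theorem exists_C_mul_X_pow_iff_eq_C_eval_one_mul {R : Type*} [Semiring R] {p : R[X]}
    (hp : p ≠ 0) :
    (∃ c : R, c ≠ 0 ∧ ∃ δ : ℕ, p = C c * X ^ δ) ↔ p = C (p.eval 1) * X ^ p.natDegree := by
  constructor
  · rintro ⟨c, hc, δ, rfl⟩
    simp [natDegree_C_mul_X_pow δ c hc]
  · intro h
    refine ⟨p.eval 1, fun h1 => hp ?_, p.natDegree, h⟩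
    rw [h, h1, C_0, zero_mul]

end Polynomial

namespace Matrix

variable {R ι : Type*} [CommRing R] [Fintype ι] [DecidableEq ι]

theorem natDegree_det_le_of_natDegree_le {Q : Matrix ι ι R[X]} {n : ι → ℕ}
    (h : ∀ i j, (Q i j).natDegree ≤ n i) : Q.det.natDegree ≤ ∑ i, n i := by
  rw [det_apply]
  refine natDegree_sum_le_of_forall_le _ _ fun σ _ => (natDegree_smul_le _ _).trans ?_
  rw [← Equiv.sum_comp σ n]
  exact (natDegree_prod_le _ _).trans (Finset.sum_le_sum fun i _ => h (σ i) i)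

theorem coeff_det_of_natDegree_le {Q : Matrix ι ι R[X]} {n : ι → ℕ}
    (h : ∀ i j, (Q i j).natDegree ≤ n i) :
    Q.det.coeff (∑ i, n i) = (of fun i j => (Q i j).coeff (n i)).det := by
  rw [det_apply, finsetSum_coeff, det_apply]
  refine Finset.sum_congr rfl fun σ _ => ?_
  rw [coeff_smul, ← Equiv.sum_comp σ n,
    coeff_prod_sum_of_natDegree_le _ _ _ fun i _ => h (σ i) i]
  rfl

theorem degree_det_eq_of_natDegree_le {Q : Matrix ι ι R[X]} {n : ι → ℕ}
    (h : ∀ i j, (Q i j).natDegree ≤ n i) (hlead : (of fun i j => (Q i j).coeff (n i)).det ≠ 0) :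
    Q.det.degree = (∑ i, n i : ℕ) := by
  rw [← coeff_det_of_natDegree_le h] at hlead
  refine le_antisymm (degree_le_natDegree.trans ?_) (le_degree_of_ne_zero hlead)
  exact_mod_cast natDegree_det_le_of_natDegree_le h

end Matrix

section ShiftedRowDegree

variable {K : Type*} [Field K] {m : ℕ} (s : Fin m → ℤ) (P : Matrix (Fin m) (Fin m) K[X])

theorem sRowDeg_ne_bot (hred : sReduced s P) (i : Fin m) : sRowDeg s P i ≠ ⊥ := by
  intro hbot
  refine hred.ne_zero (det_eq_zero_of_row_eq_zero i fun j => ?_)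
  simp [sLeadingMatrix, hbot]

variable {s P}

theorem natDegree_add_le_of_sRowDeg_eq {i j : Fin m} {r : ℤ} (hr : sRowDeg s P i = r)
    (hij : P i j ≠ 0) : (P i j).natDegree + s j ≤ r := by
  have hle := Finset.le_sup (f := fun j => WithBot.map (fun k : ℕ => (k : ℤ) + s j)
    (P i j).degree) (Finset.mem_univ j)
  rw [← sRowDeg, hr, degree_eq_natDegree hij, Nat.cast_withBot, WithBot.map_coe] at hle
  exact_mod_cast hle

theorem natDegree_mul_X_pow_le_of_sRowDeg_eq {i j : Fin m} {r c : ℤ} {a n : ℕ}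
    (hr : sRowDeg s P i = r) (ha : (a : ℤ) = s j + c) (hn : (n : ℤ) = r + c) :
    (P i j * X ^ a).natDegree ≤ n := by
  rcases eq_or_ne (P i j) 0 with hij | hij
  · simp [hij]
  · have := natDegree_add_le_of_sRowDeg_eq hr hij
    rw [natDegree_mul_X_pow _ hij]
    omega

theorem coeff_mul_X_pow_eq_sLeadingMatrix {i j : Fin m} {r c : ℤ} {a n : ℕ}
    (hr : sRowDeg s P i = r) (ha : (a : ℤ) = s j + c) (hn : (n : ℤ) = r + c) :
    (P i j * X ^ a).coeff n = sLeadingMatrix s P i j := by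
  simp only [sLeadingMatrix, hr, of_apply, WithBot.recBotCoe_coe, coeff_mul_X_pow']
  by_cases hle : 0 ≤ r - s j
  · rw [if_pos (by omega), if_pos hle]
    congr 1
    omega
  · rw [if_neg (by omega), if_neg hle]

theorem det_ne_zero_and_natDegree_det_add_sum_eq_of_sReduced (hred : sReduced s P)
    {r : Fin m → ℤ} (hr : ∀ i, sRowDeg s P i = r i) :
    P.det ≠ 0 ∧ (P.det.natDegree : ℤ) + ∑ j, s j = ∑ i, r i := by
  set c : ℤ := ∑ k, (|s k| + |r k|)
  have hc : ∀ k, |s k| + |r k| ≤ c := fun k =>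
    Finset.single_le_sum (f := fun k => |s k| + |r k|) (fun k _ => by positivity)
      (Finset.mem_univ k)
  have hsc : ∀ j, 0 ≤ s j + c := fun j => by
    linarith [hc j, neg_abs_le (s j), abs_nonneg (r j)]
  have hrc : ∀ i, 0 ≤ r i + c := fun i => by
    linarith [hc i, neg_abs_le (r i), abs_nonneg (s i)]
  set a : Fin m → ℕ := fun j => (s j + c).toNat
  set n : Fin m → ℕ := fun i => (r i + c).toNat
  have ha : ∀ j, (a j : ℤ) = s j + c := fun j => Int.toNat_of_nonneg (hsc j)
  have hn : ∀ i, (n i : ℤ) = r i + c := fun i => Int.toNat_of_nonneg (hrc i)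
  set Q := P * diagonal fun j => (X : K[X]) ^ a j
  have hQ : ∀ i j, Q i j = P i j * X ^ a j := fun i j => mul_diagonal _ _ i j
  have hQdeg : Q.det.degree = (∑ i, n i : ℕ) := by
    refine degree_det_eq_of_natDegree_le (fun i j => ?_) ?_
    · rw [hQ]
      exact natDegree_mul_X_pow_le_of_sRowDeg_eq (hr i) (ha j) (hn i)
    · convert hred.ne_zero using 3
      ext i j
      rw [of_apply, hQ, coeff_mul_X_pow_eq_sLeadingMatrix (hr i) (ha j) (hn i)]
  have hQdet : Q.det = P.det * X ^ ∑ j, a j := by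
    rw [det_mul, det_diagonal, Finset.prod_pow_eq_pow_sum]
  have hQne : Q.det ≠ 0 := fun h => by
    rw [h, degree_zero] at hQdeg
    exact WithBot.bot_ne_coe hQdeg
  have hPne : P.det ≠ 0 := left_ne_zero_of_mul (hQdet ▸ hQne)
  refine ⟨hPne, ?_⟩
  have hnat : P.det.natDegree + ∑ j, a j = ∑ i, n i := by
    rw [← natDegree_mul_X_pow _ hPne, ← hQdet, natDegree_eq_of_degree_eq_some hQdeg]
  have hint := congrArg (Nat.cast : ℕ → ℤ) hnat
  push_cast [ha, hn, Finset.sum_add_distrib] at hint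
  linarith

end ShiftedRowDegree

/-- For an `s`-reduced matrix, `deg det P = Σ rdeg_s(P) − Σ s`; in particular `det P`
is a nonzero monomial iff `det P = det(P(1))·x^Δ`. -/
theorem sReduced_det_degree
    {K : Type*} [Field K] {m : ℕ} (s : Fin m → ℤ)
    (P : Matrix (Fin m) (Fin m) K[X]) (hred : sReduced s P) :
    ∃ Δ : ℕ, P.det.degree = (Δ : ℕ∞) ∧
      ((((Δ : ℤ) + ∑ j, s j : ℤ) : WithBot ℤ) = ∑ i, sRowDeg s P i) ∧
      ((∃ c : K, c ≠ 0 ∧ ∃ δ : ℕ, P.det = Polynomial.C c * X ^ δ) ↔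
        P.det = Polynomial.C ((P.map (Polynomial.eval 1)).det) * X ^ Δ) := by
  obtain ⟨r, hr⟩ : ∃ r : Fin m → ℤ, ∀ i, sRowDeg s P i = r i :=
    ⟨fun i => (sRowDeg s P i).unbot (sRowDeg_ne_bot s P hred i),
      fun i => (WithBot.coe_unbot _ _).symm⟩
  obtain ⟨hdet, hsum⟩ := det_ne_zero_and_natDegree_det_add_sum_eq_of_sReduced hred hr
  refine ⟨P.det.natDegree, degree_eq_natDegree hdet, ?_, ?_⟩
  · rw [hsum, WithBot.coe_sum]
    exact Finset.sum_congr rfl fun i _ => (hr i).symm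
  · rw [exists_C_mul_X_pow_iff_eq_C_eval_one_mul hdet, ← coe_evalRingHom,
      RingHom.map_det]
    rfl
end
end

section
/- Let u·P = Σ_{k=0}^{D−1} p_k x^k with p_k ∈ K^{1×m}, let δ ≤ D be a positive integer, and let f = Σ_{k=0}^{δ−1} f_k x^k ∈ K[x]^{m×1}. For ζ ∈ K nonzero, define h_k = Σ_{i=0}^{k} p_{k−i} ζ^{−i} for 0 ≤ k < D. Then the evaluation of the truncation (u·P·f rem x^δ) at ζ equals ζ^{δ−1} · Σ_{k=0}^{δ−1} h_{δ−1−k} · f_k. -/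
/-
Reading off coefficients, the evaluation of the truncation is `Σ_{k + j < δ} f_k w_j ζ^(k+j)`.
Grouped by `k`, the inner sum `Σ_{j < δ-k} w_j ζ^j` is `ζ^(δ-1-k) h_{δ-1-k}` summed in reverse
order, so with the factor `ζ^k` every term carries `ζ^(δ-1)`; this rescaling needs `ζ ≠ 0`.
-/

open Finset Polynomial

namespace Polynomial

variable {R : Type*}

theorem coeff_modByMonic_X_pow_of_lt [Ring R] (p : R[X]) {n k : ℕ} (hk : k < n) :
    (p %ₘ X ^ n).coeff k = p.coeff k := by
  conv_rhs => rw [← modByMonic_add_div p (X ^ n)]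
  rw [coeff_add, coeff_X_pow_mul', if_neg (by omega), add_zero]

theorem eval_modByMonic_X_pow [CommRing R] (p : R[X]) (n : ℕ) (x : R) :
    (p %ₘ X ^ n).eval x = ∑ k ∈ range n, p.coeff k * x ^ k := by
  nontriviality R
  have hdeg : (p %ₘ X ^ n).degree < n := by
    simpa using degree_modByMonic_lt p (monic_X_pow n)
  have hnatDeg : (p %ₘ X ^ n).natDegree < n + 1 :=
    Nat.lt_succ_of_le ((natDegree_modByMonic_le p (monic_X_pow n)).trans (natDegree_X_pow_le n))
  rw [eval_eq_sum_range' hnatDeg, sum_range_succ, coeff_eq_zero_of_degree_lt hdeg, zero_mul,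
    add_zero]
  exact sum_congr rfl fun k hk => by rw [coeff_modByMonic_X_pow_of_lt p (mem_range.mp hk)]

theorem sum_range_coeff_mul_mul_pow [CommSemiring R] (p q : R[X]) (n : ℕ) (x : R) :
    ∑ k ∈ range n, (p * q).coeff k * x ^ k =
      ∑ k ∈ range n, p.coeff k * x ^ k * ∑ j ∈ range (n - k), q.coeff j * x ^ j := by
  let f k j := p.coeff k * q.coeff j * x ^ (k + j)
  calc ∑ k ∈ range n, (p * q).coeff k * x ^ k
      = ∑ m ∈ range n, ∑ k ∈ range (m + 1), f k (m - k) := by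
        refine sum_congr rfl fun m _ => ?_
        rw [coeff_mul, Nat.sum_antidiagonal_eq_sum_range_succ_mk, sum_mul]
        refine sum_congr rfl fun k hk => ?_
        simp only [f, Nat.add_sub_of_le (Nat.lt_succ_iff.mp (mem_range.mp hk))]
    _ = ∑ k ∈ range n, ∑ j ∈ range (n - k), f k j := sum_range_diag_flip n f
    _ = _ := by simp only [f, mul_sum, pow_add, mul_mul_mul_comm]

end Polynomial

theorem pow_mul_sum_range_inv_pow {K : Type*} [Semifield K] {x : K} (hx : x ≠ 0)
    (c : ℕ → K) (N : ℕ) :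
    x ^ N * ∑ j ∈ range (N + 1), c (N - j) * x⁻¹ ^ j = ∑ j ∈ range (N + 1), c j * x ^ j := by
  rw [← sum_range_reflect (fun j => c j * x ^ j), mul_sum]
  refine sum_congr rfl fun j hj => ?_
  rw [add_tsub_cancel_right, inv_pow, mul_left_comm,
    ← pow_sub₀ _ hx (Nat.lt_succ_iff.mp (mem_range.mp hj))]

theorem pow_pred_mul_sum_range_inv_pow {K : Type*} [Semifield K] {x : K} (hx : x ≠ 0)
    (c : ℕ → K) {n k : ℕ} (hk : k < n) :
    x ^ (n - 1) * ∑ j ∈ range (n - k), c (n - 1 - k - j) * x⁻¹ ^ j =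
      x ^ k * ∑ j ∈ range (n - k), c j * x ^ j := by
  obtain ⟨N, rfl⟩ := Nat.exists_eq_add_of_lt hk
  have hN : k + N + 1 - k = N + 1 := by omega
  rw [hN, add_tsub_cancel_right, add_tsub_cancel_left, pow_add, mul_assoc,
    pow_mul_sum_range_inv_pow hx]

theorem trunc_product_evaluation_general
    {K : Type*} [Field K] {m δ : ℕ}
    (w f : Fin m → K[X])
    (ζ : K) (hζ : ζ ≠ 0) :
    Polynomial.eval ζ ((∑ i, w i * f i) %ₘ (X : K[X]) ^ δ) =
      ζ ^ (δ - 1) * ∑ k ∈ Finset.range δ, ∑ i,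
        (∑ j ∈ Finset.range (δ - k), (w i).coeff (δ - 1 - k - j) * ζ⁻¹ ^ j) *
          (f i).coeff k := by
  calc Polynomial.eval ζ ((∑ i, w i * f i) %ₘ (X : K[X]) ^ δ)
      = ∑ i, ∑ n ∈ range δ, (f i * w i).coeff n * ζ ^ n := by
        simp only [eval_modByMonic_X_pow, finsetSum_coeff, sum_mul, mul_comm (w _)]
        exact sum_comm
    _ = ∑ k ∈ range δ, ∑ i,
          (f i).coeff k * (ζ ^ k * ∑ j ∈ range (δ - k), (w i).coeff j * ζ ^ j) := by
        simp only [sum_range_coeff_mul_mul_pow, mul_assoc]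
        exact sum_comm
    _ = _ := by
        rw [mul_sum]
        refine sum_congr rfl fun k hk => ?_
        rw [mul_sum]
        refine sum_congr rfl fun i _ => ?_
        rw [← mul_assoc (ζ ^ _), pow_pred_mul_sum_range_inv_pow hζ _ (mem_range.mp hk)]
        ring

/-- Evaluation of a truncated product: with `w = u·P` of degree `< D`, `f` of degree
`< δ` with `0 < δ ≤ D`, and `h_k = Σ_{i≤k} p_{k−i} ζ^{−i}`, the evaluation at `ζ ≠ 0` of
`(w·f rem x^δ)` equals `ζ^{δ−1} Σ_{k<δ} h_{δ−1−k}·f_k`. -/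
theorem trunc_product_evaluation
    {K : Type*} [Field K] {m D δ : ℕ} (hδ : 0 < δ) (hδD : δ ≤ D)
    (w f : Fin m → K[X])
    (hw : ∀ i, (w i).degree < (D : ℕ∞))
    (hf : ∀ i, (f i).degree < (δ : ℕ∞))
    (ζ : K) (hζ : ζ ≠ 0) :
    Polynomial.eval ζ ((∑ i, w i * f i) %ₘ (X : K[X]) ^ δ) =
      ζ ^ (δ - 1) * ∑ k ∈ Finset.range δ, ∑ i,
        (∑ j ∈ Finset.range (δ - k), (w i).coeff (δ - 1 - k - j) * ζ⁻¹ ^ j) *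
          (f i).coeff k :=
  trunc_product_evaluation_general w f ζ hζ
end
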